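/- Let L be a first-order language, F a nonempty finite flock of sets of L-sentences, and A an L-sentence not appearing in F (A ∉ ⋃₀ F). Let F + A = {Δ ∪ {A} | Δ ∈ F}, and for a finite nonempty flock G let Bel(G) = ⋂ of Th(Δ) over the ⊆-maximal elements Δ of G (the belief set of the epistemic state generated by G). Then Bel(F + A) = Th(Bel(F) ∪ {A}), i.e. the belief set of the pure expansion of the flock-generated epistemic state by A is obtained by adding A to the original belief set and closing under semantic consequence. -/

import Mathlib

open FirstOrder FirstOrder.Language

/-- The set of semantic consequences of a first-order theory. -/
def Th {L : FirstOrder.Language} (T : L.Theory) : L.Theory :=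
  {φ : L.Sentence | T ⊨ᵇ φ}

/-- The belief set of the epistemic state generated by a flock `G` of sets of
sentences: the intersection of the consequence sets of the `⊆`-maximal members
of `G`. -/
def Bel {L : FirstOrder.Language} (G : Set (Set L.Sentence)) : L.Theory :=
  ⋂₀ ((fun Δ : Set L.Sentence => Th Δ) '' {Δ : Set L.Sentence | Maximal (· ∈ G) Δ})

/-- The expansion of a flock `F` by a sentence `A`: add `A` to every base. -/
def flockExpand {L : FirstOrder.Language} (F : Set (Set L.Sentence)) (A : L.Sentence) :
    Set (Set L.Sentence) :=
  {Θ : Set L.Sentence | ∃ Δ ∈ F, Θ = Δ ∪ {A}}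

/-!
A model `M` of `Bel F ∪ {A}` is a model of some maximal base `Δ` of `F`: otherwise pick, for
each maximal `Δ`, a sentence of `Δ` false in `M`; their (finite) disjunction lies in every
`Th Δ`, hence in `Bel F`, yet fails in `M`. So `M` models `Δ ∪ {A}`, which is a maximal
base of `F + A` because `A` occurs in no base of `F`, and therefore `M` satisfies everything
in `Bel (F + A)`. Conversely `Bel F ∪ {A} ⊆ Th (Δ ∪ {A})` for each maximal `Δ`.
-/

namespace FirstOrder.Language

variable {L : Language}

theorem subset_Th (T : L.Theory) : T ⊆ Th T :=
  fun _ => Theory.models_sentence_of_mem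

theorem Th_subset_Th_of_subset {T T' : L.Theory} (h : T' ⊆ Th T) : Th T' ⊆ Th T := by
  intro φ hφ
  refine Theory.models_sentence_iff.2 fun M => ?_
  have : M ⊨ T' := Theory.model_iff _ |>.2 fun ψ hψ =>
    Theory.ModelsBoundedFormula.realize_sentence (h hψ) M
  exact Theory.ModelsBoundedFormula.realize_sentence hφ M

theorem Th_mono {T T' : L.Theory} (h : T ⊆ T') : Th T ⊆ Th T' :=
  Th_subset_Th_of_subset (h.trans (subset_Th T'))

theorem exists_model_of_model_sInter_Th {S : Set L.Theory} (hS : S.Finite)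
    (M : Type*) [L.Structure M] (hM : M ⊨ ⋂₀ (Th '' S)) : ∃ T ∈ S, M ⊨ T := by
  by_contra! hfalse
  have hwit : ∀ T : S, ∃ ψ ∈ (T : L.Theory), ¬ M ⊨ ψ := fun T => by
    simpa [Theory.model_iff] using hfalse T T.2
  choose ψ hψT hψM using hwit
  have := hS.to_subtype
  have hχ : Formula.iSup ψ ∈ ⋂₀ (Th '' S) := by
    rintro _ ⟨T, hT, rfl⟩
    refine Theory.models_sentence_iff.2 fun N => ?_
    exact Formula.realize_iSup.2 ⟨⟨T, hT⟩, Theory.realize_sentence_of_mem _ (hψT ⟨T, hT⟩)⟩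
  have hMχ : M ⊨ Formula.iSup ψ := Theory.realize_sentence_of_mem _ hχ
  obtain ⟨T, hT⟩ := Formula.realize_iSup.1 hMχ
  exact hψM T hT

theorem mem_Bel_iff {G : Set (Set L.Sentence)} {φ : L.Sentence} :
    φ ∈ Bel G ↔ ∀ Δ, Maximal (· ∈ G) Δ → φ ∈ Th Δ := by
  simp [Bel]

theorem Bel_subset_Th {G : Set (Set L.Sentence)} {Δ : Set L.Sentence}
    (hΔ : Maximal (· ∈ G) Δ) : Bel G ⊆ Th Δ :=
  fun _ hφ => mem_Bel_iff.1 hφ Δ hΔ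

theorem maximal_flockExpand_iff {F : Set (Set L.Sentence)} {A : L.Sentence} (hA : A ∉ ⋃₀ F)
    {Θ : Set L.Sentence} :
    Maximal (· ∈ flockExpand F A) Θ ↔ ∃ Δ, Maximal (· ∈ F) Δ ∧ Θ = Δ ∪ {A} := by
  have hcancel : ∀ Δ ∈ F, ∀ Δ', Δ ∪ {A} ⊆ Δ' ∪ {A} → Δ ⊆ Δ' := fun Δ hΔ Δ' h x hx =>
    (h (.inl hx)).resolve_right fun hxA => hA ⟨Δ, hΔ, (Set.mem_singleton_iff.1 hxA) ▸ hx⟩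
  constructor
  · rintro ⟨⟨Δ, hΔ, rfl⟩, hmax⟩
    exact ⟨Δ, ⟨hΔ, fun Δ' hΔ' hle => hcancel Δ' hΔ' Δ
      (hmax ⟨Δ', hΔ', rfl⟩ (Set.union_subset_union_left _ hle))⟩, rfl⟩
  · rintro ⟨Δ, ⟨hΔ, hmax⟩, rfl⟩
    exact ⟨⟨Δ, hΔ, rfl⟩, by
      rintro _ ⟨Δ', hΔ', rfl⟩ hle
      exact Set.union_subset_union_left _ (hmax hΔ' (hcancel Δ hΔ Δ' hle))⟩

theorem mem_Bel_flockExpand_iff {F : Set (Set L.Sentence)} {A : L.Sentence} (hA : A ∉ ⋃₀ F)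
    {φ : L.Sentence} :
    φ ∈ Bel (flockExpand F A) ↔ ∀ Δ, Maximal (· ∈ F) Δ → φ ∈ Th (Δ ∪ {A}) := by
  simp only [mem_Bel_iff, maximal_flockExpand_iff hA]
  exact ⟨fun h Δ hΔ => h _ ⟨Δ, hΔ, rfl⟩, fun h _ ⟨Δ, hΔ, hΘ⟩ => hΘ ▸ h Δ hΔ⟩

end FirstOrder.Language

theorem bel_flock_expansion_general (L : FirstOrder.Language) (F : Set (Set L.Sentence))
    (hfin : F.Finite) (A : L.Sentence) (hA : A ∉ ⋃₀ F) :
    Bel (flockExpand F A) = Th (Bel F ∪ {A}) := by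
  ext φ
  rw [mem_Bel_flockExpand_iff hA]
  constructor
  · intro hφ
    refine Theory.models_sentence_iff.2 fun M => ?_
    obtain ⟨hBel, hAM⟩ := Theory.model_union_iff.1 M.is_model
    obtain ⟨Δ, hΔ, hMΔ⟩ :=
      exists_model_of_model_sInter_Th (hfin.subset fun _ h => h.1) M hBel
    have : M ⊨ Δ ∪ {A} := Theory.model_union_iff.2 ⟨hMΔ, hAM⟩
    exact Theory.ModelsBoundedFormula.realize_sentence (hφ Δ hΔ) M
  · intro hφ Δ hΔ
    refine Th_subset_Th_of_subset (Set.union_subset ?_ ?_) hφ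
    · exact (Bel_subset_Th hΔ).trans (Th_mono Set.subset_union_left)
    · exact Set.singleton_subset_iff.2 (subset_Th _ (Set.mem_union_right Δ rfl))

/-- For a nonempty finite flock `F` of sets of sentences and a sentence
`A` not appearing in `F`, the belief set of the pure expansion of the flock-generated
epistemic state by `A` equals the closure of the original belief set together with
`A`: `Bel (F + A) = Th (Bel F ∪ {A})`. -/
theorem bel_flock_expansion (L : FirstOrder.Language) (F : Set (Set L.Sentence))
    (hfin : F.Finite) (hne : F.Nonempty) (A : L.Sentence) (hA : A ∉ ⋃₀ F) :
    Bel (flockExpand F A) = Th (Bel F ∪ {A}) :=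
  bel_flock_expansion_general L F hfin A hA
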